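/- arXiv:2407.18983 — 3 statements merged into one kernel-verified Lean document; each statement's English description precedes it below -/
import Mathlib

section
/- There exist a constant C > 0 and a real number x₀ ≥ e² such that for all real x ≥ x₀, |π(x/e) − ψ(x/e)/(log x − 1)| ≤ C·(x/e)/(log x − 1)². -/
/-!
Put `y = x / e`, so that `log x - 1 = log y` and the claim is
`π(y) - ψ(y) / log y = O(y / log² y)`. Split this as
`(π(y) - θ(y) / log y) - (ψ(y) - θ(y)) / log y`: the first term is `O(y / log² y)` by partial
summation and Chebyshev's bound `θ(y) = O(y)`, and the second is `O(√y / log y)`, since prime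
powers `p ^ k` with `k ≥ 2` contribute only `O(√y)` to `ψ(y)`.
-/

open Real Finset

/-- The prime counting function `π(x)`: the number of primes `p ≤ x`. -/
noncomputable def primePi (x : ℝ) : ℝ := Nat.primeCounting ⌊x⌋₊

/-- The second Chebyshev function `ψ(x) = ∑_{n ≤ x} Λ(n)`. -/
noncomputable def chebyshevPsi (x : ℝ) : ℝ :=
  ∑ n ∈ Finset.Iic ⌊x⌋₊, ArithmeticFunction.vonMangoldt n

open Asymptotics Filter Chebyshev

theorem chebyshevPsi_eq_psi (x : ℝ) : chebyshevPsi x = ψ x := by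
  rw [chebyshevPsi, psi_eq_sum_Icc, ← Nat.bot_eq_zero, Icc_bot]

theorem sqrt_div_log_isBigO_self_div_log_sq :
    (fun x ↦ √x / log x) =O[atTop] (fun x ↦ x / log x ^ 2) := by
  refine IsBigO.of_bound 2 ?_
  filter_upwards [eventually_gt_atTop 1] with x hx
  have hlog : 0 < log x := log_pos hx
  have hsqrt : 0 < √x := sqrt_pos.2 (by linarith)
  have hlog_le : log x ≤ 2 * √x := by
    have := log_le_sub_one_of_pos hsqrt
    rw [log_sqrt (by linarith)] at this
    linarith
  rw [norm_of_nonneg (by positivity), norm_of_nonneg (by positivity)]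
  calc √x / log x = √x * log x / log x ^ 2 := by field_simp
    _ ≤ √x * (2 * √x) / log x ^ 2 := by gcongr
    _ = 2 * (x / log x ^ 2) := by rw [mul_left_comm, mul_self_sqrt (by linarith)]; ring

theorem primePi_sub_chebyshevPsi_div_log_isBigO :
    (fun x ↦ primePi x - chebyshevPsi x / log x) =O[atTop] (fun x ↦ x / log x ^ 2) := by
  have hdecomp : (fun x ↦ primePi x - chebyshevPsi x / log x) =
      fun x ↦ (primePi x - θ x / log x) - (ψ x - θ x) / log x := by
    ext x
    rw [chebyshevPsi_eq_psi]
    ring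
  have hprime_powers : (fun x ↦ (ψ x - θ x) / log x) =O[atTop] (fun x ↦ √x / log x) := by
    simp_rw [div_eq_mul_inv]
    exact isBigO_psi_sub_theta_sqrt.mul (isBigO_refl _ _)
  rw [hdecomp]
  exact primeCounting_sub_theta_div_log_isBigO.sub
    (hprime_powers.trans sqrt_div_log_isBigO_self_div_log_sq)

theorem log_sub_one_eq_log_div_exp_one {x : ℝ} (hx : 0 < x) : log x - 1 = log (x / exp 1) := by
  rw [log_div hx.ne' (exp_pos 1).ne', log_exp]

theorem stmt1 :
    ∃ C > (0:ℝ), ∃ x₀ ≥ Real.exp 1 ^ 2, ∀ x ≥ x₀,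
      |primePi (x / Real.exp 1) - chebyshevPsi (x / Real.exp 1) / (Real.log x - 1)| ≤
        C * (x / Real.exp 1) / (Real.log x - 1) ^ 2 := by
  obtain ⟨C, hC, hbound⟩ := primePi_sub_chebyshevPsi_div_log_isBigO.exists_pos
  obtain ⟨Y, hY⟩ := eventually_atTop.1 hbound.bound
  refine ⟨C, hC, max (exp 1 ^ 2) (exp 1 * Y), le_max_left _ _, fun x hx ↦ ?_⟩
  have hx₀ : 0 < x := lt_of_lt_of_le (by positivity) ((le_max_left _ _).trans hx)
  have hxY : Y ≤ x / exp 1 := by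
    rw [le_div_iff₀ (exp_pos 1), mul_comm]
    exact (le_max_right _ _).trans hx
  have hnorm := hY _ hxY
  rw [log_sub_one_eq_log_div_exp_one hx₀, mul_div_assoc]
  rwa [norm_eq_abs, norm_of_nonneg (by positivity)] at hnorm
end

section
/- (Logarithmic Weighted Sum Inequality) For every fixed integer n > 1 there exists a real number x₀ such that for all real x ≥ x₀, (Σ_{k=1}^{n} π(x/k)/log(x/k))² < (ex/log x)·(Σ_{k=1}^{n} π(x/(ek))/log(x/(ek))); equivalently, the function ℱ(x) = (Σ_{k=1}^{n} π(x/k)/log(x/k))² − (ex/log x)·Σ_{k=1}^{n} π(x/(ek))/log(x/(ek)) satisfies ℱ(x) < 0 for all sufficiently large x. -/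
open Real Finset

/-!
Chebyshev's bounds give `π(y) / log y ≍ y / log² y`, and rescaling the argument by a fixed
factor only changes the constants. Hence the square on the left is `O(x² / log⁴ x)`, while the
`k = 1` term alone makes the right-hand side at least a constant times `x² / log³ x`.
-/

open Filter

theorem primePi_div_log_nonneg (y : ℝ) : 0 ≤ primePi y / log y := by
  rcases lt_or_ge y 2 with hy | hy
  · have hfloor : ⌊y⌋₊ < 2 := (Nat.floor_lt' two_ne_zero).2 (by exact_mod_cast hy)
    simp [primePi, Nat.primeCounting_eq_zero_iff.2 (Nat.le_of_lt_succ hfloor)]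
  · exact div_nonneg (Nat.cast_nonneg _) (log_nonneg (by linarith))

theorem eventually_primePi_div_log_le :
    ∀ᶠ y in atTop, primePi y / log y ≤ (log 4 + 1) * y / log y ^ 2 := by
  filter_upwards [Chebyshev.eventually_primeCounting_le one_pos, eventually_gt_atTop 1]
    with y hπ hy
  rw [pow_two, ← div_div]
  exact div_le_div_of_nonneg_right hπ (log_pos hy).le

theorem eventually_le_primePi_div_log :
    ∀ᶠ y in atTop, 1 / 4 * y / log y ^ 2 ≤ primePi y / log y := by
  have hlog : ∀ᶠ z in atTop, log z ≤ z / 8 := by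
    filter_upwards [isLittleO_log_id_atTop.bound (by norm_num : (0 : ℝ) < 1 / 8),
      eventually_gt_atTop 0] with z hz hz0
    rw [norm_eq_abs, norm_eq_abs, id, abs_of_pos hz0] at hz
    linarith [le_abs_self (log z)]
  have hshift : Tendsto (· + 2 : ℝ → ℝ) atTop atTop :=
    tendsto_atTop_add_const_right _ 2 tendsto_id
  filter_upwards [hshift.eventually hlog, eventually_ge_atTop 6] with y hy hy6
  have hlogy : 0 < log y := log_pos (by linarith)
  have hπ : 1 / 4 * y / log y ≤ primePi y := by
    refine le_trans ?_ (Chebyshev.pi_ge' (by linarith : (1 : ℝ) < y))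
    gcongr
    -- `log 2 > 1 / 2` and `log (y + 2) ≤ (y + 2) / 8` give `(y - 1) log 2 - log (y + 2) ≥ y / 4`
    nlinarith [log_two_gt_d9]
  rw [pow_two, ← div_div]
  exact div_le_div_of_nonneg_right hπ hlogy.le

theorem eventually_half_log_le_log_div {a : ℝ} (ha : 0 < a) :
    ∀ᶠ x in atTop, log x / 2 ≤ log (x / a) := by
  filter_upwards [tendsto_log_atTop.eventually_ge_atTop (2 * log a), eventually_gt_atTop 0]
    with x hx hx0
  rw [log_div hx0.ne' ha.ne']
  linarith

theorem eventually_comp_div_le_mul_div_log_sq {f : ℝ → ℝ} {C a : ℝ} (hC : 0 ≤ C)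
    (ha : 1 ≤ a) (hf : ∀ᶠ y in atTop, f y ≤ C * y / log y ^ 2) :
    ∀ᶠ x in atTop, f (x / a) ≤ 4 * C * x / log x ^ 2 := by
  have ha0 : 0 < a := by linarith
  have hdiv : Tendsto (· / a) atTop atTop := tendsto_id.atTop_div_const ha0
  filter_upwards [hdiv.eventually hf, eventually_half_log_le_log_div ha0, eventually_gt_atTop 1]
    with x hfx hlog hx
  have hlogx : 0 < log x := log_pos hx
  calc f (x / a) ≤ C * (x / a) / log (x / a) ^ 2 := hfx
    _ ≤ C * x / (log x / 2) ^ 2 := by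
      gcongr
      exact div_le_self (by linarith) ha
    _ = 4 * C * x / log x ^ 2 := by ring

theorem eventually_mul_div_log_sq_le_comp_div {f : ℝ → ℝ} {c a : ℝ} (hc : 0 ≤ c)
    (ha : 1 ≤ a) (hf : ∀ᶠ y in atTop, c * y / log y ^ 2 ≤ f y) :
    ∀ᶠ x in atTop, c / a * x / log x ^ 2 ≤ f (x / a) := by
  have ha0 : 0 < a := by linarith
  have hdiv : Tendsto (· / a) atTop atTop := tendsto_id.atTop_div_const ha0
  filter_upwards [hdiv.eventually hf, hdiv.eventually (eventually_gt_atTop 1)]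
    with x hfx hx
  have hx0 : 0 < x := by nlinarith [div_mul_cancel₀ x ha0.ne']
  have hlog : 0 < log (x / a) := log_pos hx
  calc c / a * x / log x ^ 2 = c * (x / a) / log x ^ 2 := by ring
    _ ≤ c * (x / a) / log (x / a) ^ 2 := by
        gcongr
        exact div_le_self hx0.le ha
    _ ≤ f (x / a) := hfx

theorem eventually_sum_comp_div_le {f : ℝ → ℝ} {C : ℝ} (n : ℕ) (hC : 0 ≤ C)
    (hf : ∀ᶠ y in atTop, f y ≤ C * y / log y ^ 2) :
    ∀ᶠ x in atTop, ∑ k ∈ Icc 1 n, f (x / k) ≤ n * (4 * C) * x / log x ^ 2 := by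
  have hterms : ∀ᶠ x in atTop, ∀ k ∈ Icc 1 n, f (x / k) ≤ 4 * C * x / log x ^ 2 :=
    (eventually_all_finset _).2 fun k hk ↦
      eventually_comp_div_le_mul_div_log_sq hC (by exact_mod_cast (mem_Icc.1 hk).1) hf
  filter_upwards [hterms] with x hx
  calc ∑ k ∈ Icc 1 n, f (x / k) ≤ n * (4 * C * x / log x ^ 2) := by
        simpa using sum_le_card_nsmul _ _ _ hx
    _ = n * (4 * C) * x / log x ^ 2 := by ring

theorem eventually_sq_lt_mul_div_log_mul {S T : ℝ → ℝ} {A b c : ℝ} (hb : 0 < b) (hc : 0 < c)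
    (hS₀ : ∀ᶠ x in atTop, 0 ≤ S x) (hS : ∀ᶠ x in atTop, S x ≤ A * x / log x ^ 2)
    (hT : ∀ᶠ x in atTop, c * x / log x ^ 2 ≤ T x) :
    ∀ᶠ x in atTop, S x ^ 2 < b * x / log x * T x := by
  filter_upwards [hS₀, hS, hT, eventually_gt_atTop 0,
    tendsto_log_atTop.eventually_gt_atTop (A ^ 2 / (b * c)),
    tendsto_log_atTop.eventually_gt_atTop 0]
    with x hS₀x hSx hTx hx hL hL₀
  have hA : A ^ 2 < b * c * log x := by rwa [div_lt_iff₀' (by positivity)] at hL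
  calc S x ^ 2 ≤ (A * x / log x ^ 2) ^ 2 := pow_le_pow_left₀ hS₀x hSx 2
    _ = A ^ 2 * (x ^ 2 / log x ^ 4) := by ring
    _ < b * c * log x * (x ^ 2 / log x ^ 4) := by gcongr
    _ = b * x / log x * (c * x / log x ^ 2) := by field_simp
    _ ≤ b * x / log x * T x := by gcongr

theorem stmt16 (n : ℕ) (hn : 1 < n) :
    ∃ x₀ : ℝ, ∀ x ≥ x₀,
      (∑ k ∈ Finset.Icc 1 n, primePi (x / (k : ℝ)) / Real.log (x / (k : ℝ))) ^ 2 <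
        (Real.exp 1 * x / Real.log x) * (∑ k ∈ Finset.Icc 1 n, primePi (x / (Real.exp 1 * (k : ℝ))) / Real.log (x / (Real.exp 1 * (k : ℝ)))) := by
  have hupper := eventually_sum_comp_div_le (f := fun y ↦ primePi y / log y) n
    (by positivity) eventually_primePi_div_log_le
  have hlower : ∀ᶠ x in atTop, 1 / 4 / exp 1 * x / log x ^ 2 ≤
      ∑ k ∈ Icc 1 n, primePi (x / (exp 1 * k)) / log (x / (exp 1 * k)) := by
    filter_upwards [eventually_mul_div_log_sq_le_comp_div (by norm_num) (one_le_exp zero_le_one)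
      eventually_le_primePi_div_log] with x hx
    refine hx.trans ?_
    simpa using single_le_sum (fun (k : ℕ) _ ↦ primePi_div_log_nonneg (x / (exp 1 * k)))
      (mem_Icc.2 ⟨le_rfl, hn.le⟩)
  exact eventually_atTop.1 <| eventually_sq_lt_mul_div_log_mul (exp_pos 1) (by positivity)
    (.of_forall fun x ↦ sum_nonneg fun k _ ↦ primePi_div_log_nonneg _) hupper hlower
end

section
/- (Generalized Cubic Polynomial Inequality) For every fixed integer n > 1 there exists a real number x₀ such that for all real x ≥ x₀, the function ℋₙ(x) = (π(x))^{3ⁿ} − (3ex/log x)·(π(x/e))^{3ⁿ − 1} + (3e²x/(log x)²)·(π(x/e²))^{3ⁿ − 2} satisfies ℋₙ(x) > 0. -/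
/-!
For large `x` put `u = x / log x`. Chebyshev's estimates give `π(x) ≥ 0.68 u` and
`π(x/e) ≤ 0.535 u`. The Erdős bound `4ᵏ · k# ≤ (2k)^(√(2k)+1) · (2k/3)# · (2k)#` (primes in
`(2k/3, k]` do not divide `C(2k, k)`) gives `θ(x) - θ(x/2) ≥ (log 4 / 6) x - o(x)`, hence
`π(x) - π(x/e) ≥ 0.21 u`. These three bounds force `π(x/e) ≤ 0.72 π(x)` and `u ≤ (25/17) π(x)`,
so for `N = 3ⁿ ≥ 9` the middle term is at most `3e · (25/17) · 0.72⁸ · π(x)^N < π(x)^N`, while the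
last term is nonnegative.
-/

open Real Finset

theorem primePi_nonneg (x : ℝ) : 0 ≤ primePi x := Nat.cast_nonneg _

namespace Nat

theorem choose_le_pow_sqrt_mul_prod_primeFactors {m : ℕ} (hm : 0 < m) (k : ℕ) :
    m.choose k ≤ m ^ m.sqrt * ∏ p ∈ (m.choose k).primeFactors, p := by
  set C := m.choose k
  rcases eq_or_ne C 0 with hC | hC
  · simp [hC]
  have hsmall : #{p ∈ C.primeFactors | p ≤ m.sqrt} ≤ m.sqrt := by
    refine (card_le_card fun p hp ↦ ?_).trans_eq (card_Icc 1 m.sqrt)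
    simp only [mem_filter, mem_primeFactors] at hp
    exact mem_Icc.2 ⟨hp.1.1.one_lt.le, hp.2⟩
  calc C = ∏ p ∈ C.primeFactors, p ^ C.factorization p := prod_primeFactors_pow_factorization hC
    _ = (∏ p ∈ C.primeFactors with p ≤ m.sqrt, p ^ C.factorization p) *
          ∏ p ∈ C.primeFactors with ¬p ≤ m.sqrt, p ^ C.factorization p :=
        (prod_filter_mul_prod_filter_not _ _ _).symm
    _ ≤ m ^ m.sqrt * ∏ p ∈ C.primeFactors with ¬p ≤ m.sqrt, p := by
        gcongr with p hp p hp
        · exact (prod_le_pow_card _ _ _ fun p _ ↦ pow_factorization_choose_le hm).trans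
            (Nat.pow_le_pow_right hm hsmall)
        · simp only [mem_filter, mem_primeFactors, not_le] at hp
          calc p ^ C.factorization p ≤ p ^ 1 :=
                Nat.pow_le_pow_right hp.1.1.pos (factorization_choose_le_one (sqrt_lt'.1 hp.2))
            _ = p := pow_one p
    _ ≤ m ^ m.sqrt * ∏ p ∈ C.primeFactors, p :=
        Nat.mul_le_mul_left _ <| prod_le_prod_of_subset_of_one_le' (filter_subset _ _)
          fun p hp _ ↦ (prime_of_mem_primeFactors hp).one_lt.le

theorem primeFactors_centralBinom_subset {n : ℕ} (hn : 2 < n) :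
    n.centralBinom.primeFactors ⊆ primesLE (2 * n / 3) ∪ (primesLE (2 * n) \ primesLE n) := by
  intro p hp
  have hpp := prime_of_mem_primeFactors hp
  have hv : 0 < n.centralBinom.factorization p :=
    hpp.factorization_pos_of_dvd (centralBinom_ne_zero n) (dvd_of_mem_primeFactors hp)
  have h2n := le_two_mul_of_factorization_centralBinom_pos hv
  simp only [mem_union, mem_sdiff, mem_primesLE]
  by_cases hpn : p ≤ n
  · left
    refine ⟨(Nat.le_div_iff_mul_le three_pos).2 ?_, hpp⟩
    by_contra! h
    exact hv.ne' (factorization_centralBinom_of_two_mul_self_lt_three_mul hn hpn (by lia))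
  · exact Or.inr ⟨⟨h2n, hpp⟩, fun h ↦ hpn h.1⟩

theorem centralBinom_mul_primorial_le {n : ℕ} (hn : 2 < n) :
    n.centralBinom * primorial n ≤
      (2 * n) ^ (2 * n).sqrt * primorial (2 * n / 3) * primorial (2 * n) := by
  have hsub : primesLE n ⊆ primesLE (2 * n) := primesLE_mono (by lia)
  have hdisj : Disjoint (primesLE (2 * n / 3)) (primesLE (2 * n) \ primesLE n) :=
    disjoint_sdiff.mono_left (primesLE_mono (by lia))
  calc n.centralBinom * primorial n
      ≤ (2 * n) ^ (2 * n).sqrt * (∏ p ∈ n.centralBinom.primeFactors, p) * primorial n := by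
        gcongr
        rw [centralBinom_eq_two_mul_choose]
        exact choose_le_pow_sqrt_mul_prod_primeFactors (by lia) n
    _ ≤ (2 * n) ^ (2 * n).sqrt *
          (primorial (2 * n / 3) * ∏ p ∈ primesLE (2 * n) \ primesLE n, p) * primorial n := by
        rw [primorial_eq_prod_primesLE (2 * n / 3), ← prod_union hdisj]
        have hprime : ∀ p ∈ primesLE (2 * n / 3) ∪ (primesLE (2 * n) \ primesLE n), p.Prime :=
          fun p hp ↦ (mem_union.1 hp).elim prime_of_mem_primesLE
            fun h ↦ prime_of_mem_primesLE (mem_sdiff.1 h).1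
        exact Nat.mul_le_mul_right _ <| Nat.mul_le_mul_left _ <| prod_le_prod_of_subset_of_one_le'
          (primeFactors_centralBinom_subset hn) fun p hp _ ↦ (hprime p hp).one_lt.le
    _ = (2 * n) ^ (2 * n).sqrt * primorial (2 * n / 3) * primorial (2 * n) := by
        rw [primorial_eq_prod_primesLE n, primorial_eq_prod_primesLE (2 * n), ← prod_sdiff hsub]
        ring

end Nat

namespace Chebyshev

theorem theta_natCast (m : ℕ) : θ m = log (primorial m) := by
  rw [theta_eq_log_primorial, Nat.floor_natCast]

theorem natCast_mul_log_four_add_theta_le {k : ℕ} (hk : 2 < k) :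
    k * log 4 + θ k ≤ θ (2 * k) + θ (2 * k / 3) + (√(2 * k) + 1) * log (2 * k) := by
  have hnat : 4 ^ k * primorial k ≤
      (2 * k) ^ ((2 * k).sqrt + 1) * primorial (2 * k / 3) * primorial (2 * k) :=
    calc 4 ^ k * primorial k ≤ 2 * k * k.centralBinom * primorial k := by
          gcongr; exact Nat.four_pow_le_two_mul_self_mul_centralBinom k (by lia)
      _ ≤ 2 * k * ((2 * k) ^ (2 * k).sqrt * primorial (2 * k / 3) * primorial (2 * k)) := by
          rw [mul_assoc]; exact Nat.mul_le_mul_left _ (Nat.centralBinom_mul_primorial_le hk)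
      _ = _ := by ring
  have hk0 : (0 : ℝ) < k := by norm_cast; lia
  have hpos : ∀ m, (0 : ℝ) < primorial m := fun m ↦ mod_cast primorial_pos m
  have hnatR : (4 : ℝ) ^ k * primorial k ≤
      (2 * k : ℝ) ^ ((2 * k).sqrt + 1) * primorial (2 * k / 3) * primorial (2 * k) := by
    exact_mod_cast hnat
  have hlog := log_le_log (mul_pos (by positivity) (hpos k)) hnatR
  have hsqrt : ((2 * k).sqrt : ℝ) ≤ √(2 * k) := mod_cast Real.nat_sqrt_le_real_sqrt
  have h2k : (0 : ℝ) ≤ log (2 * k) := log_nonneg (by norm_cast; lia)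
  rw [log_mul (by positivity) (hpos _).ne', log_mul (mul_pos (by positivity) (hpos _)).ne'
    (hpos _).ne', log_mul (by positivity) (hpos _).ne', log_pow, log_pow] at hlog
  have e1 : θ (2 * k) = log (primorial (2 * k)) := by rw [← theta_natCast]; push_cast; rfl
  have e2 : θ (2 * k / 3) = log (primorial (2 * k / 3)) := by
    rw [theta_eq_log_primorial, ← Nat.floor_div_eq_div (K := ℝ)]; push_cast; rfl
  rw [theta_natCast, e1, e2]
  push_cast at hlog
  nlinarith

theorem theta_sub_theta_half_ge {x : ℝ} (hx : 6 ≤ x) :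
    log 4 / 6 * (x - 2) - (√x + 1) * log x ≤ θ x - θ (x / 2) := by
  set k := ⌊x / 2⌋₊
  have hk3 : 3 ≤ k := Nat.le_floor (by push_cast; linarith)
  have hkx : (k : ℝ) ≤ x / 2 := Nat.floor_le (by linarith)
  have hxk : x / 2 - 1 < k := Nat.sub_one_lt_floor _
  have h2k : (1 : ℝ) ≤ 2 * k := by norm_cast; lia
  have hkey := natCast_mul_log_four_add_theta_le (show 2 < k by lia)
  have hmono : θ (2 * k) ≤ θ x := theta_mono (by linarith)
  have hthird : θ (2 * k / 3) ≤ log 4 * (2 * k / 3) := theta_le_log4_mul_x (by positivity)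
  have herr : (√(2 * k) + 1) * log (2 * k) ≤ (√x + 1) * log x := by
    gcongr
    · exact log_nonneg h2k
    · linarith
    · linarith
  have hlog4 : 0 < log 4 := log_pos (by norm_num)
  have hkl : log 4 * (x / 2 - 1) ≤ log 4 * k := by gcongr
  rw [theta_eq_theta_coe_floor (x / 2)]
  nlinarith

theorem theta_sub_theta_le_primePi_sub_mul_log {x y : ℝ} (hyx : y ≤ x) :
    θ x - θ y ≤ (primePi x - primePi y) * log x := by
  have hsub : Nat.primesLE ⌊y⌋₊ ⊆ Nat.primesLE ⌊x⌋₊ := Nat.primesLE_mono (Nat.floor_mono hyx)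
  have hcard : primePi x - primePi y = #(Nat.primesLE ⌊x⌋₊ \ Nat.primesLE ⌊y⌋₊) := by
    rw [card_sdiff_of_subset hsub, Nat.cast_sub (card_le_card hsub), primePi, primePi,
      Nat.primesLE_card_eq_primeCounting, Nat.primesLE_card_eq_primeCounting]
  rw [theta_eq_sum_primesLE, theta_eq_sum_primesLE, ← sum_sdiff_eq_sub hsub, hcard,
    ← nsmul_eq_mul]
  refine sum_le_card_nsmul _ _ _ fun p hp ↦ ?_
  have hp := Nat.mem_primesLE.1 (mem_sdiff.1 hp).1
  have hpx : (p : ℝ) ≤ x := (Nat.le_floor_iff' hp.2.ne_zero).1 hp.1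
  exact log_le_log (mod_cast hp.2.pos) hpx

end Chebyshev

open Filter Chebyshev

theorem eventually_rpow_mul_log_le {α ε : ℝ} (hα : α < 1) (hε : 0 < ε) :
    ∀ᶠ x in atTop, x ^ α * log x ≤ ε * x := by
  filter_upwards [(isLittleO_log_rpow_atTop (sub_pos.2 hα)).bound hε, eventually_gt_atTop 0]
    with x hlog hx
  rw [norm_of_nonneg (rpow_nonneg hx.le _)] at hlog
  calc x ^ α * log x ≤ x ^ α * (ε * x ^ (1 - α)) :=
        mul_le_mul_of_nonneg_left ((le_abs_self _).trans hlog) (rpow_nonneg hx.le _)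
    _ = ε * x := by rw [mul_left_comm, ← rpow_add hx, add_sub_cancel, rpow_one]

theorem eventually_log_le {ε : ℝ} (hε : 0 < ε) : ∀ᶠ x in atTop, log x ≤ ε * x := by
  simpa using eventually_rpow_mul_log_le zero_lt_one hε

theorem eventually_sqrt_mul_log_le {ε : ℝ} (hε : 0 < ε) : ∀ᶠ x in atTop, √x * log x ≤ ε * x := by
  filter_upwards [eventually_rpow_mul_log_le (α := 1 / 2) (by norm_num) hε] with x hx
  rwa [sqrt_eq_rpow]

theorem eventually_mul_div_log_le_primePi : ∀ᶠ x in atTop, 0.68 * (x / log x) ≤ primePi x := by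
  filter_upwards [eventually_log_le (ε := 0.001) (by norm_num), eventually_ge_atTop 1000]
    with x hlog hx
  have hlog2 := log_two_gt_d9
  have hshift : log (x + 2) ≤ log 2 + log x := by
    rw [← log_mul two_ne_zero (by positivity)]
    exact log_le_log (by positivity) (by linarith)
  refine le_trans ?_ (pi_ge' (by linarith))
  rw [← mul_div_assoc]
  refine div_le_div_of_nonneg_right ?_ (log_nonneg (by linarith))
  nlinarith

theorem eventually_primePi_div_exp_le :
    ∀ᶠ x in atTop, primePi (x / exp 1) ≤ 0.535 * (x / log x) := by
  have hdiv := tendsto_id.atTop_div_const (exp_pos 1)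
  filter_upwards [hdiv.eventually (eventually_primeCounting_le (ε := 0.01) (by norm_num)),
    eventually_ge_atTop (exp 30)] with x hpi hx
  have hx0 : 0 < x := (exp_pos 30).trans_le hx
  have hL : 30 ≤ log x := by simpa using log_le_log (exp_pos 30) hx
  have hlogy : log (x / exp 1) = log x - 1 := by rw [log_div hx0.ne' (exp_pos 1).ne', log_exp]
  have hP0 := primePi_nonneg (x / exp 1)
  have hconst : (log 4 + 0.01) * (x / exp 1) ≤ 0.514 * x := by
    rw [mul_div_assoc', div_le_iff₀ (exp_pos 1), log_four_eq]
    nlinarith [log_two_lt_d9, exp_one_gt_d9]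
  simp only [id, hlogy] at hpi
  rw [le_div_iff₀ (by linarith)] at hpi
  rw [← mul_div_assoc, le_div_iff₀ (by linarith)]
  unfold primePi at hP0 ⊢
  nlinarith

theorem eventually_mul_div_log_le_primePi_sub_primePi_div_exp :
    ∀ᶠ x in atTop, 0.21 * (x / log x) ≤ primePi x - primePi (x / exp 1) := by
  filter_upwards [eventually_log_le (ε := 0.005) (by norm_num),
    eventually_sqrt_mul_log_le (ε := 0.005) (by norm_num), eventually_ge_atTop 100]
    with x hlog hsqrt hx
  have hL : 0 < log x := log_pos (by linarith)
  have hhalf : θ (x / exp 1) ≤ θ (x / 2) :=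
    theta_mono (div_le_div_of_nonneg_left (by linarith) two_pos (by linarith [exp_one_gt_d9]))
  have hcheb := theta_sub_theta_half_ge (by linarith : (6 : ℝ) ≤ x)
  have hcount := theta_sub_theta_le_primePi_sub_mul_log
    (div_le_self (by linarith : 0 ≤ x) (one_le_exp zero_le_one))
  have hlog4 : 0.231 * (x - 2) ≤ log 4 / 6 * (x - 2) := by
    rw [log_four_eq]
    nlinarith [log_two_gt_d9]
  rw [← mul_div_assoc, div_le_iff₀ hL]
  nlinarith

theorem mul_mul_pow_pred_lt_pow {K u A B r c : ℝ} {N : ℕ} (hN : 9 ≤ N) (hK : 0 ≤ K) (hA : 0 < A)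
    (hB : 0 ≤ B) (hr : 0 ≤ r) (hr1 : r ≤ 1) (hc : 0 ≤ c) (hBA : B ≤ r * A) (huA : u ≤ c * A)
    (hKcr : K * c * r ^ 8 < 1) :
    K * u * B ^ (N - 1) < A ^ N := by
  have hAN : A ^ N = A * A ^ (N - 1) := by rw [← pow_succ', Nat.sub_add_cancel (show 1 ≤ N by lia)]
  calc K * u * B ^ (N - 1) ≤ K * (c * A) * (r * A) ^ (N - 1) := by gcongr
    _ = K * c * r ^ (N - 1) * A ^ N := by rw [hAN, mul_pow]; ring
    _ ≤ K * c * r ^ 8 * A ^ N := by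
        have := pow_le_pow_of_le_one hr hr1 (show 8 ≤ N - 1 by lia)
        gcongr K * c * ?_ * _
    _ < A ^ N := mul_lt_of_lt_one_left (pow_pos hA N) hKcr

theorem stmt18 (n : ℕ) (hn : 1 < n) :
    ∃ x₀ : ℝ, ∀ x ≥ x₀,
      0 < primePi x ^ (3 ^ n) -
            (3 * Real.exp 1 * x / Real.log x) * primePi (x / Real.exp 1) ^ (3 ^ n - 1) +
          (3 * Real.exp 1 ^ 2 * x / (Real.log x) ^ 2) *
            primePi (x / Real.exp 1 ^ 2) ^ (3 ^ n - 2) := by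
  obtain ⟨x₀, hx₀⟩ := eventually_atTop.1 <| eventually_mul_div_log_le_primePi.and <|
    eventually_primePi_div_exp_le.and <|
    eventually_mul_div_log_le_primePi_sub_primePi_div_exp.and (eventually_gt_atTop 1)
  refine ⟨x₀, fun x hx ↦ ?_⟩
  obtain ⟨hA, hB, hAB, hx1⟩ := hx₀ x hx
  have hu : 0 < x / log x := div_pos (by linarith) (log_pos hx1)
  have hmain : 3 * exp 1 * x / log x * primePi (x / exp 1) ^ (3 ^ n - 1) < primePi x ^ 3 ^ n := by
    rw [mul_div_assoc]
    refine mul_mul_pow_pred_lt_pow (r := 0.72) (c := 25 / 17) ?_ (by positivity) (by linarith)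
      (primePi_nonneg _) (by norm_num) (by norm_num) (by norm_num) (by linarith) (by linarith) ?_
    · calc 9 = 3 ^ 2 := rfl
        _ ≤ 3 ^ n := Nat.pow_le_pow_right (by norm_num) hn
    · nlinarith [exp_one_lt_d9]
  have hlast : 0 ≤ 3 * exp 1 ^ 2 * x / log x ^ 2 * primePi (x / exp 1 ^ 2) ^ (3 ^ n - 2) :=
    mul_nonneg (by positivity) (pow_nonneg (primePi_nonneg _) _)
  linarith
end
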